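/- arXiv:2408.14374 — 7 statements merged into one kernel-verified Lean document; each statement's English description precedes it below -/
import Mathlib

section
/- For the wheel graph W_{1,t} with t ≥ 4, the equitable dominator chromatic number is χ_ed(W_{1,t}) = ⌈t/2⌉ + 1. -/
open SimpleGraph Finset

/-- A coloring `c` of the vertices of `G` with exactly `k` colors is an
*equitable dominator coloring* if it is proper, every vertex dominates some
color class (every vertex of that class lies in its closed neighborhood),
and any two color classes differ in size by at most one. -/
def IsEquitableDominatorColoring {V : Type*} [Fintype V] (G : SimpleGraph V)
    (k : ℕ) (c : V → Fin k) : Prop :=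
  Function.Surjective c ∧
  (∀ ⦃u v : V⦄, G.Adj u v → c u ≠ c v) ∧
  (∀ v : V, ∃ i : Fin k, ∀ u : V, c u = i → u = v ∨ G.Adj v u) ∧
  (∀ i j : Fin k,
    (Finset.univ.filter fun v => c v = i).card ≤
      (Finset.univ.filter fun v => c v = j).card + 1)

/-- The equitable dominator chromatic number `χ_ed`. -/
noncomputable def edChromaticNumber {V : Type*} [Fintype V] (G : SimpleGraph V) : ℕ :=
  sInf {k | ∃ c : V → Fin k, IsEquitableDominatorColoring G k c}

/-- The wheel `W_{1,t}`: a cycle on `t` vertices together with a hub (`none`)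
adjacent to all cycle vertices. -/
def wheel (t : ℕ) : SimpleGraph (Option (Fin t)) :=
  SimpleGraph.fromRel (fun x y =>
    x = none ∨ y = none ∨
    (∃ i j : Fin t, x = some i ∧ y = some j ∧ (SimpleGraph.cycleGraph t).Adj i j))

private lemma mod_split {m a b t : ℕ} (hm : 0 < m) (ht : t ≤ 2*m) (ha : a < t) (hb : b < t)
    (h : a % m = b % m) : a = b ∨ a = b + m ∨ b = a + m := by
  have ha1 : a = m * (a / m) + a % m := (Nat.div_add_mod a m).symm
  have hb1 : b = m * (b / m) + b % m := (Nat.div_add_mod b m).symm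
  have ha2 : a / m < 2 := Nat.div_lt_of_lt_mul (by omega)
  have hb2 : b / m < 2 := Nat.div_lt_of_lt_mul (by omega)
  interval_cases h1 : a / m <;> interval_cases h2 : b / m <;> omega

private lemma wheel_hub_adj {t : ℕ} (i : Fin t) : (wheel t).Adj none (some i) := by
  rw [wheel, fromRel_adj]
  exact ⟨by simp, Or.inl (Or.inl rfl)⟩

private lemma wheel_some_adj {t : ℕ} {i j : Fin t} (h : (wheel t).Adj (some i) (some j)) :
    (SimpleGraph.cycleGraph t).Adj i j := by
  rw [wheel, fromRel_adj] at h
  obtain ⟨-, h | h⟩ := h <;>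
    rcases h with h | h | ⟨i', j', hi, hj, hadj⟩ <;> simp_all
  exact hadj.symm

private lemma wheel_lower {t k : ℕ} (c : Option (Fin t) → Fin k)
    (hproper : ∀ ⦃u v : Option (Fin t)⦄, (wheel t).Adj u v → c u ≠ c v)
    (heq : ∀ i j : Fin k, (Finset.univ.filter fun v => c v = i).card ≤
      (Finset.univ.filter fun v => c v = j).card + 1) :
    (t + 1) / 2 + 1 ≤ k := by
  have hk : 0 < k := (c none).pos
  have hubfib : (Finset.univ.filter fun v => c v = c none) = {(none : Option (Fin t))} := by
    ext u
    simp only [mem_filter, mem_univ, true_and, mem_singleton]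
    constructor
    · rintro h
      match u with
      | none => rfl
      | some i => exact absurd h (hproper (wheel_hub_adj i).symm)
    · rintro rfl; rfl
  have hsum : (Finset.univ : Finset (Option (Fin t))).card =
      ∑ i : Fin k, (Finset.univ.filter fun v => c v = i).card :=
    Finset.card_eq_sum_card_fiberwise (fun v _ => mem_univ (c v))
  have hcardV : (Finset.univ : Finset (Option (Fin t))).card = t + 1 := by
    simp [Finset.card_univ]
  have hsplit : ∑ i : Fin k, (Finset.univ.filter fun v => c v = i).card =
      (Finset.univ.filter fun v => c v = c none).card +
      ∑ i ∈ Finset.univ.erase (c none), (Finset.univ.filter fun v => c v = i).card :=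
    (Finset.add_sum_erase _ (fun i => (Finset.univ.filter fun v => c v = i).card)
      (mem_univ (c none))).symm
  have hbound : ∑ i ∈ Finset.univ.erase (c none), (Finset.univ.filter fun v => c v = i).card
      ≤ (k - 1) * 2 := by
    calc _ ≤ ∑ _i ∈ Finset.univ.erase (c none), 2 := by
          refine Finset.sum_le_sum fun i _ => ?_
          have := heq i (c none)
          rw [hubfib] at this
          simpa using this
      _ = (k - 1) * 2 := by
          rw [Finset.sum_const, smul_eq_mul, Finset.card_erase_of_mem (mem_univ _)]
          simp
  rw [hubfib] at hsplit
  simp only [Finset.card_singleton] at hsplit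
  omega

private lemma wheel_upper {t : ℕ} (ht : 4 ≤ t) :
    ∃ c : Option (Fin t) → Fin ((t + 1) / 2 + 1),
      IsEquitableDominatorColoring (wheel t) ((t + 1) / 2 + 1) c := by
  set m := (t+1)/2 with hmdef
  have hm2 : 2 ≤ m := by omega
  have hmt : m + 2 ≤ t := by omega
  have ht2m : t ≤ 2*m := by omega
  have hmlt : ∀ i : Fin t, i.val % m < m + 1 := fun i => (Nat.mod_lt _ (by omega)).trans (by omega)
  set c : Option (Fin t) → Fin (m+1) := fun u => match u with
    | none => ⟨m, by omega⟩
    | some i => ⟨i.val % m, hmlt i⟩ with hcdef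
  have hcnone : c none = ⟨m, by omega⟩ := rfl
  have hcsome : ∀ i : Fin t, c (some i) = ⟨i.val % m, hmlt i⟩ := fun i => rfl
  refine ⟨c, ?_, ?_, ?_, ?_⟩
  · -- surjectivity
    intro col
    rcases Nat.lt_or_ge col.val m with h | h
    · exact ⟨some ⟨col.val, by omega⟩, by rw [hcsome]; exact Fin.ext (by simp [Nat.mod_eq_of_lt h])⟩
    · exact ⟨none, by rw [hcnone]; exact Fin.ext (by simp; omega)⟩
  · -- properness
    rintro (_ | i) (_ | j) hadj hc
    · exact hadj.ne rfl
    · rw [hcnone, hcsome, Fin.mk.injEq] at hc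
      have := Nat.mod_lt j.val (show 0 < m by omega); omega
    · rw [hcnone, hcsome, Fin.mk.injEq] at hc
      have := Nat.mod_lt i.val (show 0 < m by omega); omega
    · rw [hcsome, hcsome, Fin.mk.injEq] at hc
      have hne : i.val ≠ j.val := fun h => hadj.ne (by simp [Fin.ext_iff, h])
      have hcyc := wheel_some_adj hadj
      rw [cycleGraph_adj'] at hcyc
      rcases mod_split (show 0 < m by omega) ht2m i.isLt j.isLt hc with h | h | h
      · exact hne h
      · have h1 : (i - j).val = m := by
          rw [Fin.sub_def]
          simp only
          have : t - j.val + i.val = m + t := by omega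
          rw [this, Nat.add_mod_right, Nat.mod_eq_of_lt (by omega)]
        have h2 : (j - i).val = t - m := by
          rw [Fin.sub_def]
          simp only
          have : t - i.val + j.val = t - m := by omega
          rw [this, Nat.mod_eq_of_lt (by omega)]
        omega
      · have h1 : (j - i).val = m := by
          rw [Fin.sub_def]
          simp only
          have : t - i.val + j.val = m + t := by omega
          rw [this, Nat.add_mod_right, Nat.mod_eq_of_lt (by omega)]
        have h2 : (i - j).val = t - m := by
          rw [Fin.sub_def]
          simp only
          have : t - j.val + i.val = t - m := by omega
          rw [this, Nat.mod_eq_of_lt (by omega)]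
        omega
  · -- domination
    intro v
    refine ⟨⟨m, by omega⟩, ?_⟩
    rintro (_ | i) hu
    · cases v with
      | none => exact Or.inl rfl
      | some j => exact Or.inr ((wheel_hub_adj j).symm)
    · rw [hcsome, Fin.mk.injEq] at hu
      have := Nat.mod_lt i.val (show 0 < m by omega); omega
  · -- equitability
    have hcard2 : ∀ col : Fin (m+1), (Finset.univ.filter fun v => c v = col).card ≤ 2 := by
      intro col
      rcases Nat.lt_or_ge col.val m with h | h
      · have hsub : (Finset.univ.filter fun v => c v = col) ⊆
            {some ⟨col.val, by omega⟩, some ⟨(col.val + m) % t, Nat.mod_lt _ (by omega)⟩} := by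
          intro u hu
          rw [mem_filter] at hu
          match u with
          | none =>
            rw [hcnone] at hu
            exact absurd (congrArg Fin.val hu.2) (by simp; omega)
          | some i =>
            rw [hcsome] at hu
            have hi : i.val % m = col.val := congrArg Fin.val hu.2
            have hqlt : i.val / m < 2 := Nat.div_lt_of_lt_mul (by omega)
            have hdm : i.val = m * (i.val / m) + i.val % m := (Nat.div_add_mod _ m).symm
            simp only [mem_insert, mem_singleton, Option.some.injEq, Fin.ext_iff]
            interval_cases hq : i.val / m
            · left; omega
            · right
              have : col.val + m < t ∨ col.val + m ≥ t := by omega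
              rcases this with h2 | h2
              · rw [Nat.mod_eq_of_lt h2]; omega
              · omega
        calc (Finset.univ.filter fun v => c v = col).card ≤ _ := Finset.card_le_card hsub
          _ ≤ 2 := (Finset.card_insert_le _ _).trans (by simp)
      · have hsub : (Finset.univ.filter fun v => c v = col) ⊆ {(none : Option (Fin t))} := by
          intro u hu
          rw [mem_filter] at hu
          match u with
          | none => simp
          | some i =>
            rw [hcsome] at hu
            have hi : i.val % m = col.val := congrArg Fin.val hu.2
            have := Nat.mod_lt i.val (show 0 < m by omega)
            omega
        exact (Finset.card_le_card hsub).trans (by simp)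
    have hcard1 : ∀ col : Fin (m+1), 1 ≤ (Finset.univ.filter fun v => c v = col).card := by
      intro col
      rcases Nat.lt_or_ge col.val m with h | h
      · refine Finset.card_pos.mpr ⟨some ⟨col.val, by omega⟩, ?_⟩
        simp only [mem_filter, mem_univ, true_and]
        rw [hcsome]; exact Fin.ext (by simp [Nat.mod_eq_of_lt h])
      · refine Finset.card_pos.mpr ⟨none, ?_⟩
        simp only [mem_filter, mem_univ, true_and]
        rw [hcnone]; exact Fin.ext (by simp; omega)
    exact fun i j => (hcard2 i).trans (by have := hcard1 j; omega)

theorem edChromaticNumber_wheel (t : ℕ) (ht : 4 ≤ t) :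
    edChromaticNumber (wheel t) = (t + 1) / 2 + 1 := by
  have hmem : (t + 1) / 2 + 1 ∈
      {k | ∃ c : Option (Fin t) → Fin k, IsEquitableDominatorColoring (wheel t) k c} :=
    wheel_upper ht
  refine le_antisymm (Nat.sInf_le hmem) (le_csInf ⟨_, hmem⟩ ?_)
  rintro k ⟨c, _, hproper, _, heq⟩
  exact wheel_lower c hproper heq
end

section
/- For the helm graph H_{1,t,t} with t ≥ 5, the equitable dominator chromatic number satisfies χ_ed(H_{1,t,t}) = χ_ed(W_{1,t-1}) + t, i.e., χ_ed(H_{1,t,t}) = ⌈(t-1)/2⌉ + 1 + t. -/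
open SimpleGraph Finset

/-- The helm `H_{1,t,t}`: the wheel `W_{1,t}` together with a pendant vertex
attached to each of the `t` cycle vertices. -/
def helm (t : ℕ) : SimpleGraph (Option (Fin t) ⊕ Fin t) :=
  SimpleGraph.fromRel (fun x y =>
    (∃ u v : Option (Fin t), x = Sum.inl u ∧ y = Sum.inl v ∧ (wheel t).Adj u v) ∨
    (∃ i : Fin t, x = Sum.inl (some i) ∧ y = Sum.inr i))

-- helper: fiber card ≤ 2 via a 2-valued separating function
lemma card_fiber_le_two {V : Type*} [Fintype V] [DecidableEq V] {k : ℕ} (c : V → Fin k)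
    (j : Fin k) (bit : V → Fin 2)
    (hinj : ∀ u v : V, c u = j → c v = j → bit u = bit v → u = v) :
    (Finset.univ.filter fun v => c v = j).card ≤ 2 := by
  have h := Finset.card_le_card_of_injOn bit
    (fun a _ => Finset.mem_univ (bit a))
    (s := Finset.univ.filter fun v => c v = j) (t := Finset.univ)
    (fun a ha b hb hab => by
      simp only [Finset.coe_filter, Set.mem_setOf_eq, Finset.mem_univ, true_and] at ha hb
      exact hinj a b ha hb hab)
  simpa using h

lemma one_le_card_fiber {V : Type*} [Fintype V] [DecidableEq V] {k : ℕ} {c : V → Fin k}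
    (hs : Function.Surjective c) (j : Fin k) :
    1 ≤ (Finset.univ.filter fun v => c v = j).card := by
  obtain ⟨v, hv⟩ := hs j
  exact Finset.card_pos.mpr ⟨v, by simp [hv]⟩

lemma equitable_of_bounds {V : Type*} [Fintype V] [DecidableEq V] {k : ℕ} {c : V → Fin k}
    (h1 : ∀ j : Fin k, 1 ≤ (Finset.univ.filter fun v => c v = j).card)
    (h2 : ∀ j : Fin k, (Finset.univ.filter fun v => c v = j).card ≤ 2) :
    ∀ i j : Fin k,
      (Finset.univ.filter fun v => c v = i).card ≤
        (Finset.univ.filter fun v => c v = j).card + 1 := by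
  intro i j
  have := h1 j
  have := h2 i
  omega

lemma wheel_adj_none {n : ℕ} (i : Fin n) : (wheel n).Adj none (some i) := by
  rw [wheel, SimpleGraph.fromRel_adj]
  exact ⟨by simp, Or.inl (Or.inl rfl)⟩

lemma wheel_adj_some {n : ℕ} {i j : Fin n} :
    (wheel n).Adj (some i) (some j) ↔ (SimpleGraph.cycleGraph n).Adj i j := by
  rw [wheel, SimpleGraph.fromRel_adj]
  constructor
  · rintro ⟨hne, (h | h | ⟨a, b, ha, hb, hab⟩) | (h | h | ⟨a, b, ha, hb, hab⟩)⟩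
    · exact absurd h (by simp)
    · exact absurd h (by simp)
    · cases Option.some_injective _ ha
      cases Option.some_injective _ hb
      exact hab
    · exact absurd h (by simp)
    · exact absurd h (by simp)
    · cases Option.some_injective _ ha
      cases Option.some_injective _ hb
      exact hab.symm
  · intro h
    exact ⟨by simpa using h.ne, Or.inl (Or.inr (Or.inr ⟨i, j, rfl, rfl, h⟩))⟩

lemma helm_adj_inl {t : ℕ} {u v : Option (Fin t)} :
    (helm t).Adj (Sum.inl u) (Sum.inl v) ↔ (wheel t).Adj u v := by
  rw [helm, SimpleGraph.fromRel_adj]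
  constructor
  · rintro ⟨hne, (⟨a, b, ha, hb, hab⟩ | ⟨i, hi, hj⟩) | (⟨a, b, ha, hb, hab⟩ | ⟨i, hi, hj⟩)⟩
    · cases Sum.inl_injective ha; cases Sum.inl_injective hb; exact hab
    · exact absurd hj (by simp)
    · cases Sum.inl_injective ha; cases Sum.inl_injective hb; exact hab.symm
    · exact absurd hj (by simp)
  · intro h
    refine ⟨fun he => h.ne (Sum.inl_injective he), Or.inl (Or.inl ⟨u, v, rfl, rfl, h⟩)⟩

lemma helm_adj_pendant {t : ℕ} {i : Fin t} {x : Option (Fin t) ⊕ Fin t} :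
    (helm t).Adj (Sum.inr i) x ↔ x = Sum.inl (some i) := by
  rw [helm, SimpleGraph.fromRel_adj]
  constructor
  · rintro ⟨hne, (⟨a, b, ha, hb, hab⟩ | ⟨j, hi, hj⟩) | (⟨a, b, ha, hb, hab⟩ | ⟨j, hi, hj⟩)⟩
    · exact absurd ha (by simp)
    · exact absurd hi (by simp)
    · exact absurd hb (by simp)
    · cases Sum.inr_injective hj; exact hi
  · rintro rfl
    exact ⟨by simp, Or.inr (Or.inr ⟨i, rfl, rfl⟩)⟩

lemma cycle_adj_nat {n : ℕ} {i j : Fin n}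
    (h : (SimpleGraph.cycleGraph n).Adj i j) :
    (i.val = j.val + 1 ∨ (j.val = n - 1 ∧ i.val = 0)) ∨
    (j.val = i.val + 1 ∨ (i.val = n - 1 ∧ j.val = 0)) := by
  rw [SimpleGraph.cycleGraph_adj'] at h
  have hi := i.isLt
  have hj := j.isLt
  rcases h with h | h
  · left
    rw [Fin.sub_def] at h
    have h' : (n - j.val + i.val) % n = 1 := h
    rcases Nat.lt_or_ge (n - j.val + i.val) n with hlt | hge
    · rw [Nat.mod_eq_of_lt hlt] at h'; omega
    · have h2 : n - j.val + i.val - n < n := by omega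
      rw [Nat.mod_eq_sub_mod hge, Nat.mod_eq_of_lt h2] at h'
      omega
  · right
    rw [Fin.sub_def] at h
    have h' : (n - i.val + j.val) % n = 1 := h
    rcases Nat.lt_or_ge (n - i.val + j.val) n with hlt | hge
    · rw [Nat.mod_eq_of_lt hlt] at h'; omega
    · have h2 : n - i.val + j.val - n < n := by omega
      rw [Nat.mod_eq_sub_mod hge, Nat.mod_eq_of_lt h2] at h'
      omega

def wheelColoring (n : ℕ) : Option (Fin n) → Fin ((n+1)/2 + 1)
  | none => ⟨(n+1)/2, Nat.lt_succ_self _⟩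
  | some i => ⟨i.val % ((n+1)/2),
      Nat.lt_succ_of_lt (Nat.mod_lt _ (by have := i.isLt; omega))⟩

lemma wheelColoring_some_val (n : ℕ) (i : Fin n) :
    (wheelColoring n (some i)).val = i.val % ((n+1)/2) := rfl

lemma wheelColoring_none_val (n : ℕ) : (wheelColoring n none).val = (n+1)/2 := rfl

lemma wheel_surj (n : ℕ) (hn : 4 ≤ n) : Function.Surjective (wheelColoring n) := by
  intro j
  rcases Nat.lt_or_ge j.val ((n+1)/2) with h | h
  · refine ⟨some ⟨j.val, by omega⟩, Fin.ext ?_⟩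
    rw [wheelColoring_some_val]
    simpa using Nat.mod_eq_of_lt h
  · refine ⟨none, Fin.ext ?_⟩
    rw [wheelColoring_none_val]
    have := j.isLt
    omega

lemma wheel_mem (n : ℕ) (hn : 4 ≤ n) :
    IsEquitableDominatorColoring (wheel n) ((n+1)/2 + 1) (wheelColoring n) := by
  have hmod : ∀ i : Fin n, (i.val % ((n+1)/2) = i.val ∧ i.val < (n+1)/2) ∨
      (i.val % ((n+1)/2) = i.val - (n+1)/2 ∧ (n+1)/2 ≤ i.val) := by
    intro i
    have hi := i.isLt
    rcases Nat.lt_or_ge i.val ((n+1)/2) with h | h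
    · exact Or.inl ⟨Nat.mod_eq_of_lt h, h⟩
    · refine Or.inr ⟨?_, h⟩
      rw [Nat.mod_eq_sub_mod h, Nat.mod_eq_of_lt (by omega)]
  refine ⟨wheel_surj n hn, ?_, ?_, ?_⟩
  · -- proper
    rintro (_ | i) (_ | j) hadj
    · exact absurd hadj (wheel n).irrefl
    · intro he
      have h := congrArg Fin.val he
      rw [wheelColoring_none_val, wheelColoring_some_val] at h
      have := hmod j
      omega
    · intro he
      have h := congrArg Fin.val he
      rw [wheelColoring_some_val, wheelColoring_none_val] at h
      have := hmod i
      omega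
    · intro he
      have hc := cycle_adj_nat (wheel_adj_some.mp hadj)
      have h := congrArg Fin.val he
      rw [wheelColoring_some_val, wheelColoring_some_val] at h
      have hi := hmod i
      have hj := hmod j
      have hilt := i.isLt
      have hjlt := j.isLt
      omega
  · -- domination
    intro v
    refine ⟨⟨(n+1)/2, Nat.lt_succ_self _⟩, fun u hu => ?_⟩
    have hu' : u = none := by
      match u with
      | none => rfl
      | some i =>
        have h := congrArg Fin.val hu
        rw [wheelColoring_some_val] at h
        have := hmod i
        have := i.isLt
        simp only [Fin.val_mk] at h
        omega
    subst hu'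
    match v with
    | none => exact Or.inl rfl
    | some i => exact Or.inr (wheel_adj_none i).symm
  · -- equitable
    refine equitable_of_bounds (fun j => one_le_card_fiber (wheel_surj n hn) j)
      (fun j => ?_)
    refine card_fiber_le_two _ j
      (fun x => Option.elim x 0 (fun i => if i.val < (n+1)/2 then 0 else 1)) ?_
    rintro (_ | a) (_ | b) ha hb hbit
    · rfl
    · exfalso
      have h := congrArg Fin.val (ha.trans hb.symm)
      rw [wheelColoring_none_val, wheelColoring_some_val] at h
      have := hmod b
      omega
    · exfalso
      have h := congrArg Fin.val (ha.trans hb.symm)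
      rw [wheelColoring_some_val, wheelColoring_none_val] at h
      have := hmod a
      omega
    · have hab : a.val % ((n+1)/2) = b.val % ((n+1)/2) := by
        have h := congrArg Fin.val (ha.trans hb.symm)
        rwa [wheelColoring_some_val, wheelColoring_some_val] at h
      simp only [Option.elim] at hbit
      have ha' := hmod a
      have hb' := hmod b
      have hyp : a.val = b.val := by
        rcases Nat.lt_or_ge a.val ((n+1)/2) with h1 | h1 <;>
          rcases Nat.lt_or_ge b.val ((n+1)/2) with h2 | h2
        · omega
        · simp [if_pos h1, if_neg (Nat.not_lt.mpr h2)] at hbit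
        · simp [if_neg (Nat.not_lt.mpr h1), if_pos h2] at hbit
        · omega
      exact congrArg some (Fin.ext hyp)

lemma wheel_ed (n : ℕ) (hn : 4 ≤ n) :
    edChromaticNumber (wheel n) = (n+1)/2 + 1 := by
  have hne : {k | ∃ c : Option (Fin n) → Fin k,
      IsEquitableDominatorColoring (wheel n) k c}.Nonempty :=
    ⟨(n+1)/2 + 1, wheelColoring n, wheel_mem n hn⟩
  refine le_antisymm (Nat.sInf_le ⟨wheelColoring n, wheel_mem n hn⟩) (le_csInf hne ?_)
  rintro k ⟨c, hsurj, hprop, hdom, heq⟩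
  -- the hub's fiber is exactly {none}
  have hfib : (Finset.univ.filter fun v => c v = c none) = {none} := by
    apply Finset.eq_singleton_iff_unique_mem.mpr
    refine ⟨by simp, ?_⟩
    intro x hx
    simp only [Finset.mem_filter] at hx
    match x with
    | none => rfl
    | some i => exact absurd hx.2 (hprop (wheel_adj_none i)).symm
  have hcard1 : (Finset.univ.filter fun v => c v = c none).card = 1 := by
    rw [hfib]; simp
  have hle2 : ∀ j : Fin k, (Finset.univ.filter fun v => c v = j).card ≤ 2 := by
    intro j
    have := heq j (c none)
    omega
  -- total count
  have htot : (n + 1) = ∑ j : Fin k, (Finset.univ.filter fun v => c v = j).card := by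
    have := Finset.card_eq_sum_card_fiberwise
      (s := (Finset.univ : Finset (Option (Fin n))))
      (t := (Finset.univ : Finset (Fin k))) (f := c) (fun x _ => Finset.mem_univ _)
    simpa using this
  have hsplit : ∑ j : Fin k, (Finset.univ.filter fun v => c v = j).card =
      (Finset.univ.filter fun v => c v = c none).card +
      ∑ j ∈ Finset.univ.erase (c none), (Finset.univ.filter fun v => c v = j).card := by
    rw [← Finset.add_sum_erase _ _ (Finset.mem_univ (c none))]
  have hbound : ∑ j ∈ Finset.univ.erase (c none),
      (Finset.univ.filter fun v => c v = j).card ≤ 2 * (k - 1) := by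
    calc ∑ j ∈ Finset.univ.erase (c none), (Finset.univ.filter fun v => c v = j).card
        ≤ ∑ _j ∈ Finset.univ.erase (c none), 2 :=
          Finset.sum_le_sum (fun j _ => hle2 j)
      _ = 2 * (k - 1) := by
          rw [Finset.sum_const, Finset.card_erase_of_mem (Finset.mem_univ _)]
          simp [Nat.mul_comm]
  have hk : 1 ≤ k := Nat.pos_of_ne_zero (fun h => by subst h; exact (c none).elim0)
  omega

def helmColoring (t : ℕ) : Option (Fin t) ⊕ Fin t → Fin (t + t/2 + 1)
  | Sum.inl none => ⟨t + t/2, Nat.lt_succ_self _⟩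
  | Sum.inl (some i) => ⟨i.val, by have := i.isLt; omega⟩
  | Sum.inr i => ⟨t + i.val/2,
      Nat.lt_succ_of_le (Nat.add_le_add_left
        (Nat.div_le_div_right (by have := i.isLt; omega)) t)⟩

lemma helmColoring_hub_val (t : ℕ) : (helmColoring t (Sum.inl none)).val = t + t/2 := rfl

lemma helmColoring_cycle_val (t : ℕ) (i : Fin t) :
    (helmColoring t (Sum.inl (some i))).val = i.val := rfl

lemma helmColoring_pendant_val (t : ℕ) (i : Fin t) :
    (helmColoring t (Sum.inr i)).val = t + i.val/2 := rfl

def helmBit (t : ℕ) : Option (Fin t) ⊕ Fin t → Fin 2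
  | Sum.inl none => 1
  | Sum.inl (some _) => 0
  | Sum.inr i => ⟨i.val % 2, Nat.mod_lt _ (by omega)⟩

lemma helmBit_hub_val (t : ℕ) : (helmBit t (Sum.inl none)).val = 1 := rfl
lemma helmBit_cycle_val (t : ℕ) (i : Fin t) : (helmBit t (Sum.inl (some i))).val = 0 := rfl
lemma helmBit_pendant_val (t : ℕ) (i : Fin t) :
    (helmBit t (Sum.inr i)).val = i.val % 2 := rfl

lemma helm_surj (t : ℕ) (ht : 5 ≤ t) : Function.Surjective (helmColoring t) := by
  intro j
  have hj := j.isLt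
  rcases Nat.lt_or_ge j.val t with h | h
  · exact ⟨Sum.inl (some ⟨j.val, h⟩), Fin.ext (by rw [helmColoring_cycle_val])⟩
  · rcases Nat.lt_or_ge (2*(j.val - t)) t with h2 | h2
    · refine ⟨Sum.inr ⟨2*(j.val - t), h2⟩, Fin.ext ?_⟩
      rw [helmColoring_pendant_val]
      simp only [Fin.val_mk]
      omega
    · refine ⟨Sum.inl none, Fin.ext ?_⟩
      rw [helmColoring_hub_val]
      omega

lemma helm_class_cycle (t : ℕ) (i : Fin t) (u : Option (Fin t) ⊕ Fin t)
    (hu : (helmColoring t u).val = i.val) : u = Sum.inl (some i) := by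
  have hi := i.isLt
  match u with
  | Sum.inl none =>
    rw [helmColoring_hub_val] at hu; omega
  | Sum.inl (some a) =>
    rw [helmColoring_cycle_val] at hu
    exact congrArg (fun x => Sum.inl (some x)) (Fin.ext hu)
  | Sum.inr a =>
    rw [helmColoring_pendant_val] at hu; omega

lemma helm_mem (t : ℕ) (ht : 5 ≤ t) :
    IsEquitableDominatorColoring (helm t) (t + t/2 + 1) (helmColoring t) := by
  refine ⟨helm_surj t ht, ?_, ?_, ?_⟩
  · -- proper
    rintro ((_ | a) | a) ((_ | b) | b) hadj he
    · exact (helm t).irrefl hadj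
    · have h := congrArg Fin.val he
      rw [helmColoring_hub_val, helmColoring_cycle_val] at h
      have := b.isLt; omega
    · have h := helm_adj_pendant.mp hadj.symm
      simp at h
    · have h := congrArg Fin.val he
      rw [helmColoring_cycle_val, helmColoring_hub_val] at h
      have := a.isLt; omega
    · have hw := helm_adj_inl.mp hadj
      have h := congrArg Fin.val he
      rw [helmColoring_cycle_val, helmColoring_cycle_val] at h
      exact hw.ne (congrArg some (Fin.ext h))
    · have h := helm_adj_pendant.mp hadj.symm
      have hab : a = b := by simpa using h
      subst hab
      have h2 := congrArg Fin.val he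
      rw [helmColoring_cycle_val, helmColoring_pendant_val] at h2
      have := a.isLt; omega
    · have h := helm_adj_pendant.mp hadj
      simp at h
    · have h := helm_adj_pendant.mp hadj
      have hab : b = a := by simpa using h
      subst hab
      have h2 := congrArg Fin.val he
      rw [helmColoring_pendant_val, helmColoring_cycle_val] at h2
      have := b.isLt; omega
    · have h := helm_adj_pendant.mp hadj
      simp at h
  · -- domination
    rintro ((_ | a) | a)
    · -- hub dominates the class of cycle vertex 0
      refine ⟨⟨(0 : ℕ), by omega⟩, fun u hu => Or.inr ?_⟩
      have hu' := helm_class_cycle t ⟨0, by omega⟩ u (by rw [hu])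
      rw [hu']
      exact helm_adj_inl.mpr (wheel_adj_none _)
    · -- cycle vertex dominates its own class
      refine ⟨⟨a.val, by have := a.isLt; omega⟩, fun u hu => Or.inl ?_⟩
      exact helm_class_cycle t a u (by rw [hu])
    · -- pendant dominates the class of its cycle vertex
      refine ⟨⟨a.val, by have := a.isLt; omega⟩, fun u hu => Or.inr ?_⟩
      have hu' := helm_class_cycle t a u (by rw [hu])
      rw [hu']
      exact helm_adj_pendant.mpr rfl
  · -- equitable
    refine equitable_of_bounds (fun j => one_le_card_fiber (helm_surj t ht) j)
      (fun j => ?_)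
    refine card_fiber_le_two _ j (helmBit t) ?_
    rintro ((_ | a) | a) ((_ | b) | b) ha hb hbit
    · rfl
    · exfalso
      have h := congrArg Fin.val (ha.trans hb.symm)
      rw [helmColoring_hub_val, helmColoring_cycle_val] at h
      have := b.isLt; omega
    · exfalso
      have h := congrArg Fin.val (ha.trans hb.symm)
      rw [helmColoring_hub_val, helmColoring_pendant_val] at h
      have hb2 := congrArg Fin.val hbit
      rw [helmBit_hub_val, helmBit_pendant_val] at hb2
      have := b.isLt; omega
    · exfalso
      have h := congrArg Fin.val (ha.trans hb.symm)
      rw [helmColoring_cycle_val, helmColoring_hub_val] at h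
      have := a.isLt; omega
    · have h := congrArg Fin.val (ha.trans hb.symm)
      rw [helmColoring_cycle_val, helmColoring_cycle_val] at h
      exact congrArg (fun x => Sum.inl (some x)) (Fin.ext h)
    · exfalso
      have h := congrArg Fin.val (ha.trans hb.symm)
      rw [helmColoring_cycle_val, helmColoring_pendant_val] at h
      have := a.isLt; omega
    · exfalso
      have h := congrArg Fin.val (ha.trans hb.symm)
      rw [helmColoring_pendant_val, helmColoring_hub_val] at h
      have hb2 := congrArg Fin.val hbit
      rw [helmBit_pendant_val, helmBit_hub_val] at hb2
      have := a.isLt; omega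
    · exfalso
      have h := congrArg Fin.val (ha.trans hb.symm)
      rw [helmColoring_pendant_val, helmColoring_cycle_val] at h
      have := b.isLt; omega
    · have h := congrArg Fin.val (ha.trans hb.symm)
      rw [helmColoring_pendant_val, helmColoring_pendant_val] at h
      have hb2 := congrArg Fin.val hbit
      rw [helmBit_pendant_val, helmBit_pendant_val] at hb2
      exact congrArg Sum.inr (Fin.ext (by omega))

lemma helm_ed (t : ℕ) (ht : 5 ≤ t) :
    edChromaticNumber (helm t) = t + t/2 + 1 := by
  have hne : {k | ∃ c : Option (Fin t) ⊕ Fin t → Fin k,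
      IsEquitableDominatorColoring (helm t) k c}.Nonempty :=
    ⟨t + t/2 + 1, helmColoring t, helm_mem t ht⟩
  refine le_antisymm (Nat.sInf_le ⟨helmColoring t, helm_mem t ht⟩) (le_csInf hne ?_)
  rintro k ⟨c, hsurj, hprop, hdom, heq⟩
  -- choose dominated classes for pendants
  choose d hd using fun i : Fin t => hdom (Sum.inr i)
  -- each such fiber lies in the pendant edge
  have hsub : ∀ i : Fin t, ∀ u, c u = d i →
      u = Sum.inr i ∨ u = Sum.inl (some i) := by
    intro i u hu
    rcases hd i u hu with h | h
    · exact Or.inl h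
    · exact Or.inr (helm_adj_pendant.mp h)
  -- each such fiber is a singleton
  have hcard : ∀ i : Fin t, (Finset.univ.filter fun v => c v = d i).card = 1 := by
    intro i
    refine le_antisymm ?_ (one_le_card_fiber hsurj (d i))
    refine Finset.card_le_one.mpr (fun a ha b hb => ?_)
    simp only [Finset.mem_filter, Finset.mem_univ, true_and] at ha hb
    rcases hsub i a ha with h1 | h1 <;> rcases hsub i b hb with h2 | h2 <;>
        subst h1 <;> subst h2
    · rfl
    · exact absurd (ha.trans hb.symm)
        (hprop (helm_adj_pendant.mpr rfl))
    · exact absurd (hb.trans ha.symm)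
        (hprop (helm_adj_pendant.mpr rfl))
    · rfl
  -- d is injective
  have hdinj : Function.Injective d := by
    intro i i' hii
    obtain ⟨u, hu⟩ := hsurj (d i)
    have hu' : c u = d i' := by rw [hu, hii]
    rcases hsub i u hu with h1 | h1 <;> rcases hsub i' u hu' with h2 | h2 <;>
      · rw [h1] at h2
        first
        | exact Sum.inr_injective h2
        | exact Option.some_injective _ (Sum.inl_injective h2)
        | exact absurd h2 (by simp)
  -- all fibers have size at most 2
  have hle2 : ∀ j : Fin k, (Finset.univ.filter fun v => c v = j).card ≤ 2 := by
    intro j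
    have h1 := heq j (d ⟨0, by omega⟩)
    have h2 := hcard ⟨0, by omega⟩
    omega
  -- total count
  have htot : (2*t + 1) = ∑ j : Fin k, (Finset.univ.filter fun v => c v = j).card := by
    have h := Finset.card_eq_sum_card_fiberwise
      (s := (Finset.univ : Finset (Option (Fin t) ⊕ Fin t)))
      (t := (Finset.univ : Finset (Fin k))) (f := c) (fun x _ => Finset.mem_univ _)
    simp only [Finset.card_univ, Fintype.card_sum, Fintype.card_option,
      Fintype.card_fin] at h
    omega
  -- split the sum over the image of d and its complement
  set s : Finset (Fin k) := Finset.univ.image d with hs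
  have hsc : s.card = t := by
    rw [hs, Finset.card_image_of_injective _ hdinj, Finset.card_univ, Fintype.card_fin]
  have htk : t ≤ k := by
    have := Finset.card_le_card (Finset.subset_univ s)
    simpa [hsc] using this
  have hsum1 : ∑ j ∈ s, (Finset.univ.filter fun v => c v = j).card = t := by
    rw [hs, Finset.sum_image (fun i _ i' _ h => hdinj h)]
    simp only [hcard]
    simp
  have hsum2 : ∑ j ∈ Finset.univ \ s, (Finset.univ.filter fun v => c v = j).card
      ≤ 2 * (k - t) := by
    calc ∑ j ∈ Finset.univ \ s, (Finset.univ.filter fun v => c v = j).card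
        ≤ ∑ _j ∈ Finset.univ \ s, 2 := Finset.sum_le_sum (fun j _ => hle2 j)
      _ = 2 * (k - t) := by
          rw [Finset.sum_const, Finset.card_sdiff_of_subset (Finset.subset_univ s)]
          simp [hsc, Nat.mul_comm]
  have hsplit : ∑ j ∈ Finset.univ \ s, (Finset.univ.filter fun v => c v = j).card +
      ∑ j ∈ s, (Finset.univ.filter fun v => c v = j).card =
      ∑ j : Fin k, (Finset.univ.filter fun v => c v = j).card :=
    Finset.sum_sdiff (Finset.subset_univ s)
  omega

theorem edChromaticNumber_helm (t : ℕ) (ht : 5 ≤ t) :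
    edChromaticNumber (helm t) = edChromaticNumber (wheel (t - 1)) + t ∧
    edChromaticNumber (helm t) = (t - 1 + 1) / 2 + 1 + t := by
  have h1 := helm_ed t ht
  have h2 := wheel_ed (t - 1) (by omega)
  have ht1 : t - 1 + 1 = t := by omega
  rw [ht1] at h2
  refine ⟨?_, ?_⟩ <;> rw [h1] <;> [rw [h2]; rw [ht1]] <;> omega
end

section
/- For a, b ≥ 2, the equitable dominator chromatic number of the complement of the bi-star S_{a,b} equals a + b. -/
open SimpleGraph Finset

/-- The bi-star `S_{a,b}`: two adjacent support vertices, the first with `a`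
pendant neighbors and the second with `b` pendant neighbors. -/
def biStar (a b : ℕ) : SimpleGraph ((Unit ⊕ Unit) ⊕ (Fin a ⊕ Fin b)) :=
  SimpleGraph.fromRel (fun x y =>
    (x = Sum.inl (Sum.inl ()) ∧ y = Sum.inl (Sum.inr ())) ∨
    (∃ i : Fin a, x = Sum.inl (Sum.inl ()) ∧ y = Sum.inr (Sum.inl i)) ∨
    (∃ j : Fin b, x = Sum.inl (Sum.inr ()) ∧ y = Sum.inr (Sum.inr j)))

section Aux

variable {a b : ℕ}

/-- Two distinct pendant vertices are adjacent in the complement. -/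
lemma pendant_adj_compl {p q : Fin a ⊕ Fin b} (h : p ≠ q) :
    (biStar a b)ᶜ.Adj (Sum.inr p) (Sum.inr q) := by
  rw [SimpleGraph.compl_adj]
  refine ⟨by simp [h], ?_⟩
  simp [biStar, SimpleGraph.fromRel_adj]

lemma center1_adj_pendantB (j : Fin b) :
    (biStar a b)ᶜ.Adj (Sum.inl (Sum.inl ())) (Sum.inr (Sum.inr j)) := by
  rw [SimpleGraph.compl_adj]
  refine ⟨by simp, ?_⟩
  simp [biStar, SimpleGraph.fromRel_adj]

lemma center2_adj_pendantA (i : Fin a) :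
    (biStar a b)ᶜ.Adj (Sum.inl (Sum.inr ())) (Sum.inr (Sum.inl i)) := by
  rw [SimpleGraph.compl_adj]
  refine ⟨by simp, ?_⟩
  simp [biStar, SimpleGraph.fromRel_adj]

lemma biStar_adj_centers :
    (biStar a b).Adj (Sum.inl (Sum.inl ())) (Sum.inl (Sum.inr ())) := by
  rw [biStar, SimpleGraph.fromRel_adj]
  exact ⟨by simp, Or.inl (Or.inl ⟨rfl, rfl⟩)⟩

lemma biStar_adj_c1A (i : Fin a) :
    (biStar a b).Adj (Sum.inl (Sum.inl ())) (Sum.inr (Sum.inl i)) := by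
  rw [biStar, SimpleGraph.fromRel_adj]
  exact ⟨by simp, Or.inl (Or.inr (Or.inl ⟨i, rfl, rfl⟩))⟩

lemma biStar_adj_c2B (j : Fin b) :
    (biStar a b).Adj (Sum.inl (Sum.inr ())) (Sum.inr (Sum.inr j)) := by
  rw [biStar, SimpleGraph.fromRel_adj]
  exact ⟨by simp, Or.inl (Or.inr (Or.inr ⟨j, rfl, rfl⟩))⟩

end Aux

theorem edChromaticNumber_compl_biStar (a b : ℕ) (ha : 2 ≤ a) (hb : 2 ≤ b) :
    edChromaticNumber (biStar a b)ᶜ = a + b := by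
  have hab : 0 < a + b := by omega
  have haab : a < a + b := by omega
  have ha1 : (1 : ℕ) < a + b := by omega
  have ha2 : a + 1 < a + b := by omega
  set V := (Unit ⊕ Unit) ⊕ (Fin a ⊕ Fin b) with hV
  let c : V → Fin (a + b) := fun v =>
    Sum.elim (Sum.elim (fun _ => (⟨0, hab⟩ : Fin (a+b))) (fun _ => ⟨a, haab⟩))
      (fun p => finSumFinEquiv p) v
  have hmem : (a + b) ∈ {k | ∃ c : V → Fin k, IsEquitableDominatorColoring (biStar a b)ᶜ k c} := by
    refine ⟨c, ?_, ?_, ?_, ?_⟩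
    · -- surjective
      intro i
      exact ⟨Sum.inr (finSumFinEquiv.symm i), by simp [c]⟩
    · -- proper
      intro u v hadj hcc
      have hne := hadj.ne
      have hnadj := ((SimpleGraph.compl_adj _ _ _).mp hadj).2
      rcases u with (⟨⟩|⟨⟩)|(i|j) <;> rcases v with (⟨⟩|⟨⟩)|(i'|j') <;>
        simp only [c, Sum.elim_inl, Sum.elim_inr, finSumFinEquiv_apply_left,
          finSumFinEquiv_apply_right, Fin.ext_iff, Fin.coe_castAdd, Fin.coe_natAdd,
          Fin.val_mk] at hcc
      · exact hne rfl
      · omega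
      · exact hnadj (biStar_adj_c1A i')
      · have := j'.isLt; omega
      · omega
      · exact hne rfl
      · have := i'.isLt; omega
      · exact hnadj (biStar_adj_c2B j')
      · exact hnadj (biStar_adj_c1A i).symm
      · have := i.isLt; omega
      · exact hne (by rw [show i = i' from Fin.ext hcc])
      · have := i.isLt; omega
      · have := j.isLt; omega
      · exact hnadj (biStar_adj_c2B j).symm
      · have := i'.isLt; omega
      · exact hne (by rw [show j = j' from Fin.ext (by omega)])
    · -- dominator
      intro v
      rcases v with (⟨⟩|⟨⟩)|p
      · -- center1 dominates color a+1 (pendant B 1)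
        refine ⟨⟨a+1, ha2⟩, fun u hu => ?_⟩
        rcases u with (⟨⟩|⟨⟩)|(i|j) <;>
          simp only [c, Sum.elim_inl, Sum.elim_inr, finSumFinEquiv_apply_left,
            finSumFinEquiv_apply_right, Fin.ext_iff, Fin.coe_castAdd, Fin.coe_natAdd,
            Fin.val_mk] at hu
        · omega
        · omega
        · have := i.isLt; omega
        · exact Or.inr (center1_adj_pendantB j)
      · -- center2 dominates color 1 (pendant A 1)
        refine ⟨⟨1, ha1⟩, fun u hu => ?_⟩
        rcases u with (⟨⟩|⟨⟩)|(i|j) <;>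
          simp only [c, Sum.elim_inl, Sum.elim_inr, finSumFinEquiv_apply_left,
            finSumFinEquiv_apply_right, Fin.ext_iff, Fin.coe_castAdd, Fin.coe_natAdd,
            Fin.val_mk] at hu
        · omega
        · omega
        · exact Or.inr (center2_adj_pendantA i)
        · omega
      · -- a pendant dominates the class of pendant B 1 (colour a+1)
        refine ⟨⟨a+1, ha2⟩, fun u hu => ?_⟩
        rcases u with (⟨⟩|⟨⟩)|q
        · exfalso
          simp only [c, Sum.elim_inl, Sum.elim_inr, Fin.ext_iff, Fin.val_mk] at hu
          omega
        · exfalso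
          simp only [c, Sum.elim_inl, Sum.elim_inr, Fin.ext_iff, Fin.val_mk] at hu
          omega
        · by_cases hpq : p = q
          · exact Or.inl (by rw [hpq])
          · exact Or.inr (pendant_adj_compl hpq)
    · -- equitable
      intro i j
      have hle : (Finset.univ.filter fun v => c v = i).card ≤ 2 := by
        have hsub : (Finset.univ.filter fun v => c v = i) ⊆
            {Sum.inr (finSumFinEquiv.symm i),
             if (i : ℕ) = 0 then Sum.inl (Sum.inl ()) else Sum.inl (Sum.inr ())} := by
          intro v hv
          rw [Finset.mem_filter] at hv
          have hv2 := hv.2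
          rcases v with (⟨⟩|⟨⟩)|p
          · have h0 : (i : ℕ) = 0 := by
              simp only [c, Sum.elim_inl, Sum.elim_inr] at hv2
              rw [← hv2]
            rw [if_pos h0]
            simp
          · have h0 : (i : ℕ) = a := by
              simp only [c, Sum.elim_inl, Sum.elim_inr] at hv2
              rw [← hv2]
            rw [if_neg (by omega)]
            simp
          · have : p = finSumFinEquiv.symm i := by
              simp only [c, Sum.elim_inl, Sum.elim_inr] at hv2
              rw [← hv2, Equiv.symm_apply_apply]
            simp [this]
        refine le_trans (Finset.card_le_card hsub) ?_
        refine le_trans (Finset.card_insert_le _ _) ?_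
        simp
      have hge : 1 ≤ (Finset.univ.filter fun v => c v = j).card := by
        exact Finset.card_pos.mpr ⟨Sum.inr (finSumFinEquiv.symm j), by simp [c]⟩
      exact hle.trans (Nat.succ_le_succ hge)
  have hlb : ∀ k ∈ {k | ∃ c : V → Fin k, IsEquitableDominatorColoring (biStar a b)ᶜ k c},
      a + b ≤ k := by
    rintro k ⟨c', hc'⟩
    have hinj : Function.Injective (fun p : Fin a ⊕ Fin b => c' (Sum.inr p)) := by
      intro p q h
      by_contra hpq
      exact hc'.2.1 (pendant_adj_compl hpq) h
    calc a + b = Fintype.card (Fin a ⊕ Fin b) := by simp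
      _ ≤ Fintype.card (Fin k) := Fintype.card_le_of_injective _ hinj
      _ = k := by simp
  exact le_antisymm (Nat.sInf_le hmem) (le_csInf ⟨_, hmem⟩ hlb)
end

section
/- For t ≥ 5, the equitable dominator chromatic number of the complement of the wheel W_{1,t} equals 1 + ⌈t/2⌉, i.e., 1 + χ_ed(complement of C_t). -/
open SimpleGraph Finset

/-!
Color classes of a proper coloring of the complement of `C_t` are cliques of `C_t`, which is
triangle-free for `t ≥ 4`, so they have at most two vertices and `χ_ed ≥ ⌈t/2⌉`. Coloring by the
consecutive pairs `{2j, 2j+1}` attains this: for `t ≥ 5` there are at least three pairs, and a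
vertex, having only two neighbours on the cycle, misses one of the first three pairs entirely and
so dominates it in the complement.

In the complement of the wheel the hub is isolated, so the class it dominates is `{hub}`;
equitability then caps every class at two vertices, whence `χ_ed ≥ 1 + ⌈t/2⌉`, attained by the pair
coloring together with a new color for the hub.
-/

namespace SimpleGraph

variable {V α : Type*} {G : SimpleGraph V}

theorem IsClique.card_lt_of_cliqueFree {s : Finset V} {n : ℕ} (hs : G.IsClique (s : Set V))
    (hG : G.CliqueFree n) : #s < n := by
  by_contra! h
  obtain ⟨u, hus, hu⟩ := exists_subset_card_eq h
  exact hG u ⟨hs.subset (coe_subset.2 hus), hu⟩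

/-- A proper coloring of `Gᶜ` has cliques of `G` as color classes. -/
theorem CliqueFree.card_fiber_lt_of_compl [Fintype V] [DecidableEq α] {n : ℕ}
    (hG : G.CliqueFree n) {c : V → α} (hc : ∀ ⦃u v⦄, Gᶜ.Adj u v → c u ≠ c v) (i : α) :
    #{v | c v = i} < n := by
  refine IsClique.card_lt_of_cliqueFree (fun u hu v hv huv => ?_) hG
  by_contra hnadj
  simp only [coe_filter, mem_univ, true_and, Set.mem_ofPred_eq] at hu hv
  exact hc ⟨huv, hnadj⟩ (hu.trans hv.symm)

theorem not_map_some_adj_none (u : Option V) : ¬ (G.map Function.Embedding.some).Adj none u := by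
  rw [map_adj]
  simp

section Cycle

variable {t : ℕ}

theorem cycleGraph_adj_iff_val (ht : 2 ≤ t) {u v : Fin t} :
    (cycleGraph t).Adj u v ↔ u.val + 1 = v.val ∨ v.val + 1 = u.val ∨
      (u.val = 0 ∧ v.val + 1 = t) ∨ (v.val = 0 ∧ u.val + 1 = t) := by
  have hu := u.isLt
  have hv := v.isLt
  rw [cycleGraph_adj']
  rcases lt_trichotomy u v with h | rfl | h
  · rw [Fin.coe_sub_iff_lt.2 h, Fin.sub_val_of_le h.le]
    omega
  · rw [Fin.sub_val_of_le le_rfl]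
    omega
  · rw [Fin.sub_val_of_le h.le, Fin.coe_sub_iff_lt.2 h]
    omega

theorem cycleGraph_cliqueFree_three (ht : 4 ≤ t) : (cycleGraph t).CliqueFree 3 := by
  intro s hs
  obtain ⟨a, b, c, hab, hac, hbc, -⟩ := is3Clique_iff.1 hs
  rw [cycleGraph_adj_iff_val (by omega)] at hab hac hbc
  omega

theorem cycleGraph_degree_le_two (v : Fin t) : (cycleGraph t).degree v ≤ 2 := by
  match t, v with
  | 1, v => simp [cycleGraph_one_eq_bot]
  | n + 2, v => exact cycleGraph_degree_two_le ▸ card_le_two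

/-- The at most two neighbours of `v` meet at most two of the classes `w / 2 = m`. -/
theorem exists_lt_three_forall_adj_div_two_ne (v : Fin t) :
    ∃ m < 3, ∀ w : Fin t, (cycleGraph t).Adj v w → w.val / 2 ≠ m := by
  classical
  have hcard : #(((cycleGraph t).neighborFinset v).image fun w => w.val / 2) < #(range 3) :=
    card_image_le.trans_lt ((card_neighborFinset_eq_degree _ v).trans_lt
      ((cycleGraph_degree_le_two v).trans_lt (by simp)))
  obtain ⟨m, hm, hmnot⟩ := exists_mem_notMem_of_card_lt_card hcard
  refine ⟨m, mem_range.1 hm, fun w hw hwm => hmnot ?_⟩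
  exact mem_image.2 ⟨w, (mem_neighborFinset _ _ _).2 hw, hwm⟩

end Cycle

end SimpleGraph

section Coloring

variable {V : Type*} [Fintype V] {G : SimpleGraph V} {k : ℕ} {c : V → Fin k}

theorem edChromaticNumber_eq (hc : IsEquitableDominatorColoring G k c)
    (hmin : ∀ k' (c' : V → Fin k'), IsEquitableDominatorColoring G k' c' → k ≤ k') :
    edChromaticNumber G = k :=
  le_antisymm (Nat.sInf_le ⟨c, hc⟩) (le_csInf ⟨k, c, hc⟩ fun _ ⟨c', hc'⟩ => hmin _ c' hc')

theorem card_le_mul_of_card_fiber_le {n : ℕ} (hc : ∀ i, #{v | c v = i} ≤ n) :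
    Fintype.card V ≤ n * k := by
  simpa using card_le_mul_card_image_of_maps_to (fun v _ => mem_univ (c v)) n fun i _ => hc i

theorem one_le_card_fiber_of_surjective (hc : Function.Surjective c) (i : Fin k) :
    1 ≤ #{v | c v = i} :=
  let ⟨v, hv⟩ := hc i
  card_pos.2 ⟨v, by simpa using hv⟩

namespace IsEquitableDominatorColoring

theorem card_le_two_mul_of_compl_cliqueFree {H : SimpleGraph V} (hH : H.CliqueFree 3)
    (hc : IsEquitableDominatorColoring Hᶜ k c) : Fintype.card V ≤ 2 * k :=
  card_le_mul_of_card_fiber_le fun i => Nat.le_of_lt_succ (hH.card_fiber_lt_of_compl hc.2.1 i)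

theorem fiber_eq_singleton_of_isolated [DecidableEq V] (hc : IsEquitableDominatorColoring G k c)
    {v : V} (hv : ∀ u, ¬ G.Adj v u) : ({u | c u = c v} : Finset V) = {v} := by
  obtain ⟨i, hi⟩ := hc.2.2.1 v
  have hfiber : ∀ u, c u = i → u = v := fun u hu => (hi u hu).resolve_right (hv u)
  obtain ⟨u, hu⟩ := hc.1 i
  have hvi : c v = i := hfiber u hu ▸ hu
  ext u
  simp only [mem_filter, mem_univ, true_and, mem_singleton, hvi]
  exact ⟨hfiber u, fun h => h ▸ hvi⟩

/-- Equitability against the singleton class `{v}` caps every class at two vertices. -/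
theorem card_lt_two_mul_of_isolated [DecidableEq V] (hc : IsEquitableDominatorColoring G k c)
    {v : V} (hv : ∀ u, ¬ G.Adj v u) : Fintype.card V < 2 * k := by
  have hsingle := hc.fiber_eq_singleton_of_isolated hv
  have hle : ∀ j, #{u | c u = j} ≤ 2 := fun j => by
    simpa [hsingle] using hc.2.2.2 j (c v)
  have hrest : #(univ.erase v) ≤ 2 * #(univ.erase (c v)) := by
    refine card_le_mul_card_image_of_maps_to (fun u hu => ?_) 2
      fun j _ => (card_le_card (filter_subset_filter _ (erase_subset _ _))).trans (hle j)
    refine mem_erase.2 ⟨fun huv => ?_, mem_univ _⟩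
    have : u ∈ ({u | c u = c v} : Finset V) := by simpa using huv
    exact (mem_erase.1 hu).1 (mem_singleton.1 (hsingle ▸ this))
  simp only [card_erase_of_mem (mem_univ _), card_univ, Fintype.card_fin] at hrest
  have := (c v).pos
  have := Fintype.card_pos_iff.2 ⟨v⟩
  omega

end IsEquitableDominatorColoring

end Coloring

section PairColoring

variable {t : ℕ}

theorem cycleGraph_adj_of_val_div_two_eq {u v : Fin t} (huv : u ≠ v)
    (h : u.val / 2 = v.val / 2) : (cycleGraph t).Adj u v := by
  have := Fin.val_ne_of_ne huv
  rw [cycleGraph_adj_iff_val (by omega)]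
  omega

def pairColoring (t : ℕ) (v : Fin t) : Fin ((t + 1) / 2) :=
  ⟨v.val / 2, by omega⟩

theorem pairColoring_surjective : Function.Surjective (pairColoring t) :=
  fun j => ⟨⟨2 * j.val, by omega⟩, Fin.ext (by simp [pairColoring])⟩

theorem pairColoring_proper_compl ⦃u v : Fin t⦄ (huv : (cycleGraph t)ᶜ.Adj u v) :
    pairColoring t u ≠ pairColoring t v :=
  fun h => huv.2 (cycleGraph_adj_of_val_div_two_eq huv.1 (congrArg Fin.val h))

theorem card_fiber_pairColoring_le_two (ht : 4 ≤ t) (i : Fin ((t + 1) / 2)) :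
    #{v | pairColoring t v = i} ≤ 2 :=
  Nat.le_of_lt_succ ((cycleGraph_cliqueFree_three ht).card_fiber_lt_of_compl
    pairColoring_proper_compl i)

theorem isEquitableDominatorColoring_pairColoring (ht : 5 ≤ t) :
    IsEquitableDominatorColoring (cycleGraph t)ᶜ ((t + 1) / 2) (pairColoring t) := by
  refine ⟨pairColoring_surjective, pairColoring_proper_compl, fun v => ?_, fun i j => ?_⟩
  · obtain ⟨m, hm, hnadj⟩ := exists_lt_three_forall_adj_div_two_ne v
    refine ⟨⟨m, by omega⟩, fun u hu => or_iff_not_imp_left.2 fun huv => ⟨Ne.symm huv, ?_⟩⟩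
    exact fun hadj => hnadj u hadj (congrArg Fin.val hu)
  · have := card_fiber_pairColoring_le_two (by omega) i
    have := one_le_card_fiber_of_surjective pairColoring_surjective j
    omega

end PairColoring

section Wheel

variable {V : Type*} [Fintype V] {G : SimpleGraph V} {k : ℕ} {c : V → Fin k}

theorem compl_wheel_eq_map (t : ℕ) :
    (wheel t)ᶜ = (cycleGraph t)ᶜ.map Function.Embedding.some := by
  ext u v
  rw [map_adj]
  cases u <;> cases v <;> simp [wheel, adj_comm]
  tauto

theorem card_fiber_optionElim_zero :
    #{o : Option V | o.elim 0 (Fin.succ ∘ c) = 0} = 1 := by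
  rw [card_eq_one]
  refine ⟨none, ?_⟩
  ext o
  cases o <;> simp [Fin.succ_ne_zero]

theorem card_fiber_optionElim_succ (i : Fin k) :
    #{o : Option V | o.elim 0 (Fin.succ ∘ c) = i.succ} = #{v | c v = i} := by
  have hfiber : ({o : Option V | o.elim 0 (Fin.succ ∘ c) = i.succ} : Finset _) =
      ({v | c v = i} : Finset V).map Function.Embedding.some := by
    ext o
    cases o <;> simp [(Fin.succ_ne_zero i).symm]
  rw [hfiber, card_map]

theorem IsEquitableDominatorColoring.map_some (hc : IsEquitableDominatorColoring G k c)
    (hle : ∀ i, #{v | c v = i} ≤ 2) :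
    IsEquitableDominatorColoring (G.map Function.Embedding.some) (k + 1)
      (fun o => o.elim 0 (Fin.succ ∘ c)) := by
  obtain ⟨hsurj, hproper, hdom, hequit⟩ := hc
  refine ⟨fun i => ?_, fun u v huv => ?_, fun v => ?_, fun i j => ?_⟩
  · cases i using Fin.cases with
    | zero => exact ⟨none, rfl⟩
    | succ i => obtain ⟨v, rfl⟩ := hsurj i; exact ⟨some v, rfl⟩
  · obtain ⟨u, v, hadj, rfl, rfl⟩ := (map_adj _ _ _ _).1 huv
    simpa using hproper hadj
  · cases v with
    | none => exact ⟨0, fun u hu => Or.inl (by cases u <;> simp_all [Fin.succ_ne_zero])⟩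
    | some v =>
      obtain ⟨i, hi⟩ := hdom v
      refine ⟨i.succ, fun u hu => ?_⟩
      cases u with
      | none => simp [(Fin.succ_ne_zero i).symm] at hu
      | some u =>
        rcases hi u (by simpa using hu) with rfl | hadj
        · exact Or.inl rfl
        · exact Or.inr (map_adj_apply.2 hadj)
  · cases i using Fin.cases <;> cases j using Fin.cases <;>
      simp only [card_fiber_optionElim_zero, card_fiber_optionElim_succ]
    · omega
    · omega
    · exact hle _
    · exact hequit _ _

end Wheel

theorem edChromaticNumber_compl_wheel (t : ℕ) (ht : 5 ≤ t) :
    edChromaticNumber (wheel t)ᶜ = 1 + (t + 1) / 2 ∧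
    edChromaticNumber (wheel t)ᶜ = 1 + edChromaticNumber (SimpleGraph.cycleGraph t)ᶜ := by
  have hcycle : edChromaticNumber (cycleGraph t)ᶜ = (t + 1) / 2 := by
    refine edChromaticNumber_eq (isEquitableDominatorColoring_pairColoring ht) fun k c hc => ?_
    have := hc.card_le_two_mul_of_compl_cliqueFree (cycleGraph_cliqueFree_three (by omega))
    rw [Fintype.card_fin] at this
    omega
  have hwheel : edChromaticNumber (wheel t)ᶜ = (t + 1) / 2 + 1 := by
    rw [compl_wheel_eq_map]
    refine edChromaticNumber_eq ((isEquitableDominatorColoring_pairColoring ht).map_some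
      (card_fiber_pairColoring_le_two (by omega))) fun k c hc => ?_
    have := hc.card_lt_two_mul_of_isolated not_map_some_adj_none
    rw [Fintype.card_option, Fintype.card_fin] at this
    omega
  omega
end

section
/- A connected graph G on n vertices satisfies χ_ed(G) = n if and only if G is isomorphic to the complete graph K_n. -/
open SimpleGraph Finset

-- aux A: trivial coloring
lemma edc_equiv {V : Type*} [Fintype V] (G : SimpleGraph V) (e : V ≃ Fin (Fintype.card V)) :
    IsEquitableDominatorColoring G (Fintype.card V) e := by
  refine ⟨e.surjective, fun u v h hc => h.ne (e.injective hc), fun v => ⟨e v, fun u hu => Or.inl (e.injective hu)⟩, fun i j => ?_⟩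
  have h1 : ∀ i : Fin (Fintype.card V), (Finset.univ.filter fun v => e v = i) = {e.symm i} := by
    intro i; ext x; simp [Equiv.eq_symm_apply, eq_comm]
  rw [h1, h1]; simp

-- aux: neighbor exists
lemma exists_adj {V : Type*} [Fintype V] {G : SimpleGraph V} (hG : G.Connected)
    (h2 : 1 < Fintype.card V) (w : V) : ∃ z, G.Adj w z := by
  obtain ⟨y, hy⟩ := Fintype.exists_ne_of_one_lt_card h2 w
  obtain ⟨p⟩ := hG.preconnected w y
  cases p with
  | nil => exact absurd rfl hy.symm
  | cons h _ => exact ⟨_, h⟩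

-- aux C: non-complete gives n-1 coloring
lemma edc_noncomplete {V : Type*} [Fintype V] {G : SimpleGraph V} (hG : G.Connected)
    {u v : V} (huv : u ≠ v) (hna : ¬ G.Adj u v) :
    ∃ c : V → Fin (Fintype.card V - 1), IsEquitableDominatorColoring G (Fintype.card V - 1) c := by
  classical
  have hcard : Fintype.card {x : V // x ≠ v} = Fintype.card V - 1 := by
    simp [Fintype.card_subtype_compl]
  let f : {x : V // x ≠ v} ≃ Fin (Fintype.card V - 1) := (Fintype.equivFin _).trans (finCongr hcard)
  let c : V → Fin (Fintype.card V - 1) := fun x =>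
    if h : x = v then f ⟨u, huv⟩ else f ⟨x, h⟩
  have h2 : 1 < Fintype.card V := Fintype.one_lt_card_iff_nontrivial.2 ⟨u, v, huv⟩
  have hcv : c v = f ⟨u, huv⟩ := by simp [c]
  have hcx : ∀ (x : V) (h : x ≠ v), c x = f ⟨x, h⟩ := fun x h => by simp [c, h]
  -- class of a vertex z ∉ {u,v} is {z}
  have hsing : ∀ (z : V) (hz : z ≠ v), z ≠ u → ∀ x, c x = f ⟨z, hz⟩ → x = z := by
    intro z hz hzu x hx
    by_cases hxv : x = v
    · subst hxv; rw [hcv] at hx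
      exact absurd (congrArg Subtype.val (f.injective hx)) hzu.symm
    · rw [hcx x hxv] at hx
      exact congrArg Subtype.val (f.injective hx)
  refine ⟨c, ?_, ?_, ?_, ?_⟩
  · intro i
    obtain ⟨x, hx⟩ := f.surjective i
    exact ⟨x.1, by rw [hcx x.1 x.2]; simpa using hx⟩
  · intro a b hab hc
    by_cases hav : a = v
    · have hbv : b ≠ v := fun h => hab.ne (hav.trans h.symm)
      rw [hav, hcv, hcx b hbv] at hc
      have h3 : u = b := congrArg Subtype.val (f.injective hc)
      exact hna (by rw [h3, ← hav]; exact hab.symm)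
    · by_cases hbv : b = v
      · rw [hbv, hcx a hav, hcv] at hc
        have h3 : a = u := congrArg Subtype.val (f.injective hc)
        exact hna (by rw [← h3, ← hbv]; exact hab)
      · rw [hcx a hav, hcx b hbv] at hc
        exact hab.ne (congrArg Subtype.val (f.injective hc))
  · intro w
    by_cases hw : w ≠ v ∧ w ≠ u
    · exact ⟨c w, fun x hx => Or.inl (by
        rw [hcx w hw.1] at hx
        exact hsing w hw.1 hw.2 x hx)⟩
    · -- w = u or w = v: pick a neighbor z
      obtain ⟨z, hz⟩ := exists_adj hG h2 w
      have hwu_or : w = v ∨ w = u := by tauto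
      have hzv : z ≠ v := by
        rintro rfl
        rcases hwu_or with rfl | rfl
        · exact hz.ne' rfl
        · exact hna hz
      have hzu : z ≠ u := by
        rintro rfl
        rcases hwu_or with rfl | rfl
        · exact hna hz.symm
        · exact hz.ne' rfl
      exact ⟨f ⟨z, hzv⟩, fun x hx => Or.inr (by rw [hsing z hzv hzu x hx]; exact hz)⟩
  · intro i j
    have hsub : (Finset.univ.filter fun x => c x = i) ⊆ {(f.symm i).1, v} := by
      intro x hx
      simp only [Finset.mem_filter, Finset.mem_univ, true_and] at hx
      by_cases hxv : x = v
      · simp [hxv]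
      · rw [hcx x hxv] at hx
        have : (⟨x, hxv⟩ : {x : V // x ≠ v}) = f.symm i := f.injective (by simp [hx])
        simp [← this]
    have h1 : (Finset.univ.filter fun x => c x = i).card ≤ 2 :=
      le_trans (Finset.card_le_card hsub) ((Finset.card_insert_le _ _).trans (by simp))
    have h2' : 1 ≤ (Finset.univ.filter fun x => c x = j).card := by
      obtain ⟨x, hx⟩ := f.surjective j
      refine Finset.card_pos.2 ⟨x.1, ?_⟩
      simp only [Finset.mem_filter, Finset.mem_univ, true_and]
      rw [hcx x.1 x.2]; simpa using hx
    omega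

theorem edChromaticNumber_eq_card_iff {V : Type*} [Fintype V] (G : SimpleGraph V)
    (hG : G.Connected) :
    edChromaticNumber G = Fintype.card V ↔
      Nonempty (G ≃g (⊤ : SimpleGraph (Fin (Fintype.card V)))) := by
  classical
  set S := {k | ∃ c : V → Fin k, IsEquitableDominatorColoring G k c} with hS
  have memn : Fintype.card V ∈ S := ⟨Fintype.equivFin V, edc_equiv G _⟩
  constructor
  · intro h
    by_contra hn
    -- G is not complete
    have : ∃ u v : V, u ≠ v ∧ ¬ G.Adj u v := by
      by_contra hc
      push_neg at hc
      have hGtop : G = ⊤ := by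
        ext a b
        constructor
        · exact fun hab => hab.ne
        · exact fun hab => hc a b hab
      exact hn ⟨hGtop ▸ SimpleGraph.Iso.completeGraph (Fintype.equivFin V)⟩
    obtain ⟨u, v, huv, hna⟩ := this
    have h2 : 1 < Fintype.card V := Fintype.one_lt_card_iff_nontrivial.2 ⟨u, v, huv⟩
    have hmem : Fintype.card V - 1 ∈ S := edc_noncomplete hG huv hna
    have := Nat.sInf_le hmem
    rw [hS] at this
    unfold edChromaticNumber at h
    omega
  · rintro ⟨φ⟩
    have hcomp : ∀ a b : V, a ≠ b → G.Adj a b := by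
      intro a b hab
      have : (⊤ : SimpleGraph (Fin (Fintype.card V))).Adj (φ a) (φ b) := by
        simpa using hab
      exact φ.map_rel_iff.1 this
    have hall : ∀ k ∈ S, k = Fintype.card V := by
      rintro k ⟨c, hsurj, hprop, -, -⟩
      have hinj : Function.Injective c := by
        intro a b hab
        by_contra hne
        exact hprop (hcomp a b hne) hab
      have := Fintype.card_of_bijective ⟨hinj, hsurj⟩
      simpa using this.symm
    have hsmem : sInf S ∈ S := Nat.sInf_mem ⟨_, memn⟩
    exact hall _ hsmem
end

section
/- For every natural number k ≥ 1 there exists a graph G with χ_ed(G) − χ_d(G) = k; in particular, the complete bipartite graph K_{2, 3k+1} satisfies χ_d = 2 and χ_ed = k + 2. -/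
/-!
Colouring the two sides of `K_{2,n}` differently is a dominator colouring, so `χ_d = 2`.
In a proper colouring, a class dominated by `v` lies either in `{v}` or in the neighbourhood
of `v`; for a vertex `v` on the large side this caps the class at `2` vertices, and equitability
then caps every class at `3`. With `m` colours on the `3k + 3` vertices this forces
`3k + 3 ≤ 2 + 3 (m - 1)`, i.e. `m ≥ k + 2`. Conversely, colour the small side `0` and the vertex
`b` of the large side `1 + b mod (k + 1)`: the classes on the large side have
`⌊(3k + 1) / (k + 1)⌋ ∈ {1, 2}` vertices or one more, so together with the class of size `2`
they are equitable.
-/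

open SimpleGraph Finset

/-- A *dominator coloring* with exactly `k` colors: a proper coloring in which
every vertex dominates some color class. -/
def IsDominatorColoring {V : Type*} [Fintype V] (G : SimpleGraph V)
    (k : ℕ) (c : V → Fin k) : Prop :=
  Function.Surjective c ∧
  (∀ ⦃u v : V⦄, G.Adj u v → c u ≠ c v) ∧
  (∀ v : V, ∃ i : Fin k, ∀ u : V, c u = i → u = v ∨ G.Adj v u)

/-- The dominator chromatic number `χ_d`. -/
noncomputable def domChromaticNumber {V : Type*} [Fintype V] (G : SimpleGraph V) : ℕ :=
  sInf {k | ∃ c : V → Fin k, IsDominatorColoring G k c}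

section Coloring

variable {V : Type*} [Fintype V] {G : SimpleGraph V} {m : ℕ} {c : V → Fin m}

theorem card_lt_mul_of_forall_card_le_succ (i : Fin m)
    (h : ∀ j, #{v | c v = j} ≤ #{v | c v = i} + 1) :
    Fintype.card V < (#{v | c v = i} + 1) * m := by
  calc Fintype.card V = ∑ j, #{v | c v = j} :=
        card_eq_sum_card_fiberwise fun v _ => mem_univ (c v)
    _ < ∑ _j : Fin m, (#{v | c v = i} + 1) :=
        sum_lt_sum (fun j _ => h j) ⟨i, mem_univ i, Nat.lt_succ_self _⟩
    _ = (#{v | c v = i} + 1) * m := by simp [mul_comm]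

theorem card_colorClass_le_of_dominates [DecidableRel G.Adj]
    (hc : ∀ ⦃u v : V⦄, G.Adj u v → c u ≠ c v) {v : V} {i : Fin m}
    (hv : ∀ u, c u = i → u = v ∨ G.Adj v u) :
    #{u | c u = i} ≤ max 1 (G.degree v) := by
  by_cases hvi : c v = i
  · have : ({u | c u = i} : Finset V) ⊆ {v} := fun u hu => by
      simp only [mem_filter, mem_univ, true_and] at hu
      rcases hv u hu with rfl | hadj
      · exact mem_singleton_self u
      · exact absurd (hvi.trans hu.symm) (hc hadj)
    exact (card_le_card this).trans (le_max_of_le_left (card_singleton v).le)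
  · have : ({u | c u = i} : Finset V) ⊆ G.neighborFinset v := fun u hu => by
      simp only [mem_filter, mem_univ, true_and] at hu
      rcases hv u hu with rfl | hadj
      · exact absurd hu hvi
      · exact (G.mem_neighborFinset v u).2 hadj
    exact (card_le_card this).trans (le_max_of_le_right le_rfl)

theorem IsEquitableDominatorColoring.card_lt_mul [DecidableRel G.Adj]
    (hc : IsEquitableDominatorColoring G m c) (v : V) :
    Fintype.card V < (max 1 (G.degree v) + 1) * m := by
  obtain ⟨i, hi⟩ := hc.2.2.1 v
  calc Fintype.card V < (#{u | c u = i} + 1) * m :=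
        card_lt_mul_of_forall_card_le_succ i fun j => hc.2.2.2 j i
    _ ≤ (max 1 (G.degree v) + 1) * m := by
        gcongr; exact card_colorClass_le_of_dominates hc.2.1 hi

theorem IsDominatorColoring.isEquitableDominatorColoring (hc : IsDominatorColoring G m c)
    (h : ∀ i j, #{v | c v = i} ≤ #{v | c v = j} + 1) :
    IsEquitableDominatorColoring G m c :=
  ⟨hc.1, hc.2.1, hc.2.2, h⟩

end Coloring

theorem Finset.card_filter_sum {α β : Type*} [Fintype α] [Fintype β] (p : α ⊕ β → Prop)
    [DecidablePred p] : #{v | p v} = #{a | p (.inl a)} + #{b | p (.inr b)} := by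
  simp only [card_filter, Fintype.sum_sum_type]

theorem Fin.card_filter_val_mod_eq {n q j : ℕ} (hj : j < q) :
    #{b : Fin n | (b : ℕ) % q = j} = n / q + if j < n % q then 1 else 0 := by
  have hcount := Nat.count_modEq_card n (r := q) (by omega) j
  rw [Nat.mod_eq_of_lt hj, Nat.count_eq_card_filter_range, ← Nat.Iio_eq_range,
    ← Fin.map_valEmbedding_univ, filter_map, card_map] at hcount
  rw [← hcount]
  simp [Nat.ModEq, Nat.mod_eq_of_lt hj]

namespace SimpleGraph

variable {α β : Type*} [Fintype α] [Fintype β]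

theorem degree_completeBipartiteGraph_inr [DecidableRel (completeBipartiteGraph α β).Adj]
    (b : β) : (completeBipartiteGraph α β).degree (.inr b) = Fintype.card α := by
  have : (completeBipartiteGraph α β).neighborFinset (.inr b) = univ.map .inl := by
    ext (a | a) <;> simp
  rw [← card_neighborFinset_eq_degree, this, card_map, card_univ]

theorem isDominatorColoring_completeBipartiteGraph_sumElim [Nonempty α] [Nonempty β] :
    IsDominatorColoring (completeBipartiteGraph α β) 2 (Sum.elim 0 1) := by
  refine ⟨?_, ?_, ?_⟩
  · intro i
    fin_cases i
    · exact ⟨.inl (Classical.arbitrary α), rfl⟩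
    · exact ⟨.inr (Classical.arbitrary β), rfl⟩
  · rintro (a | a) (b | b) hadj <;> simp_all
  · rintro (a | b)
    · exact ⟨1, by rintro (_ | _) h <;> simp_all⟩
    · exact ⟨0, by rintro (_ | _) h <;> simp_all⟩

theorem domChromaticNumber_completeBipartiteGraph [Nonempty α] [Nonempty β] :
    domChromaticNumber (completeBipartiteGraph α β) = 2 := by
  refine IsLeast.csInf_eq ⟨⟨_, isDominatorColoring_completeBipartiteGraph_sumElim⟩, ?_⟩
  rintro m ⟨c, -, hc, -⟩
  have hadj : (completeBipartiteGraph α β).Adj (.inl (Classical.arbitrary α))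
      (.inr (Classical.arbitrary β)) := by simp
  exact Fin.nontrivial_iff_two_le.1 ⟨_, _, hc hadj⟩

def bipartiteModColoring (α : Type*) (n k : ℕ) : α ⊕ Fin n → Fin (k + 2) :=
  Sum.elim 0 fun b => (Fin.ofNat (k + 1) b).succ

theorem card_bipartiteModColoring_eq_zero (n k : ℕ) :
    #{v | bipartiteModColoring α n k v = 0} = Fintype.card α := by
  rw [card_filter_sum]
  simp [bipartiteModColoring]

theorem card_bipartiteModColoring_eq_succ (n k : ℕ) (j : Fin (k + 1)) :
    #{v | bipartiteModColoring α n k v = j.succ} =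
      n / (k + 1) + if (j : ℕ) < n % (k + 1) then 1 else 0 := by
  rw [← Fin.card_filter_val_mod_eq j.isLt, card_filter_sum]
  simp only [bipartiteModColoring, Sum.elim_inl, Sum.elim_inr, Pi.zero_apply,
    (Fin.succ_ne_zero j).symm, Fin.succ_inj, filter_false, card_empty, zero_add]
  simp only [Fin.ext_iff, Fin.val_ofNat]

theorem isDominatorColoring_bipartiteModColoring [Nonempty α] {n k : ℕ} (hk : k < n) :
    IsDominatorColoring (completeBipartiteGraph α (Fin n)) (k + 2)
      (bipartiteModColoring α n k) := by
  refine ⟨?_, ?_, ?_⟩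
  · intro i
    induction i using Fin.cases with
    | zero => exact ⟨.inl (Classical.arbitrary α), rfl⟩
    | succ j => exact ⟨.inr ⟨j, by omega⟩, by simp [bipartiteModColoring]⟩
  · rintro (a | a) (b | b) hadj <;> simp_all [bipartiteModColoring, (Fin.succ_ne_zero _).symm]
  · rintro (a | b)
    · exact ⟨1, by rintro (_ | _) h <;> simp_all [bipartiteModColoring]⟩
    · exact ⟨0, by rintro (_ | _) h <;> simp_all [bipartiteModColoring]⟩

theorem isEquitableDominatorColoring_bipartiteModColoring (k : ℕ) :
    IsEquitableDominatorColoring (completeBipartiteGraph (Fin 2) (Fin (3 * k + 1))) (k + 2)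
      (bipartiteModColoring (Fin 2) (3 * k + 1) k) := by
  refine (isDominatorColoring_bipartiteModColoring (by omega)).isEquitableDominatorColoring ?_
  set s := (3 * k + 1) / (k + 1)
  have hs : 1 ≤ s ∧ s ≤ 2 :=
    ⟨(Nat.le_div_iff_mul_le (by omega)).2 (by omega),
      Nat.lt_succ_iff.1 ((Nat.div_lt_iff_lt_mul (by omega)).2 (by omega))⟩
  have hcard : ∀ i, s ≤ #{v | bipartiteModColoring (Fin 2) (3 * k + 1) k v = i} ∧
      #{v | bipartiteModColoring (Fin 2) (3 * k + 1) k v = i} ≤ s + 1 := by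
    intro i
    induction i using Fin.cases with
    | zero => rw [card_bipartiteModColoring_eq_zero, Fintype.card_fin]; omega
    | succ j => rw [card_bipartiteModColoring_eq_succ]; split <;> omega
  intro i j
  have := hcard i
  have := hcard j
  omega

theorem edChromaticNumber_completeBipartiteGraph_fin_two (k : ℕ) :
    edChromaticNumber (completeBipartiteGraph (Fin 2) (Fin (3 * k + 1))) = k + 2 := by
  classical
  refine IsLeast.csInf_eq ⟨⟨_, isEquitableDominatorColoring_bipartiteModColoring k⟩, ?_⟩
  rintro m ⟨c, hc⟩
  have := hc.card_lt_mul (.inr 0)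
  rw [degree_completeBipartiteGraph_inr] at this
  simp only [Fintype.card_sum, Fintype.card_fin, Nat.one_le_ofNat, sup_of_le_right,
    Nat.reduceAdd] at this
  omega

end SimpleGraph

theorem exists_edChromaticNumber_sub_domChromaticNumber_general (k : ℕ) :
    (∃ (V : Type) (_ : Fintype V) (G : SimpleGraph V),
      edChromaticNumber G - domChromaticNumber G = k) ∧
    domChromaticNumber (completeBipartiteGraph (Fin 2) (Fin (3 * k + 1))) = 2 ∧
    edChromaticNumber (completeBipartiteGraph (Fin 2) (Fin (3 * k + 1))) = k + 2 := by
  have hdom := domChromaticNumber_completeBipartiteGraph (α := Fin 2) (β := Fin (3 * k + 1))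
  have hed := edChromaticNumber_completeBipartiteGraph_fin_two k
  refine ⟨⟨_, inferInstance, completeBipartiteGraph (Fin 2) (Fin (3 * k + 1)), ?_⟩, hdom, hed⟩
  rw [hdom, hed]
  omega

theorem exists_edChromaticNumber_sub_domChromaticNumber (k : ℕ) (hk : 1 ≤ k) :
    (∃ (V : Type) (_ : Fintype V) (G : SimpleGraph V),
      edChromaticNumber G - domChromaticNumber G = k) ∧
    domChromaticNumber (completeBipartiteGraph (Fin 2) (Fin (3 * k + 1))) = 2 ∧
    edChromaticNumber (completeBipartiteGraph (Fin 2) (Fin (3 * k + 1))) = k + 2 :=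
  exists_edChromaticNumber_sub_domChromaticNumber_general k
end

section
/- If a graph G has a universal vertex (a vertex adjacent to all other vertices) and n vertices, then χ_ed(G) ≥ ⌈(n+1)/2⌉. -/
open SimpleGraph Finset

theorem edChromaticNumber_ge_of_universal_vertex {V : Type*} [Fintype V]
    (G : SimpleGraph V) (v : V) (hv : ∀ u : V, u ≠ v → G.Adj v u) :
    (Fintype.card V + 2) / 2 ≤ edChromaticNumber G := by
  have hne : {k | ∃ c : V → Fin k, IsEquitableDominatorColoring G k c}.Nonempty := by
    refine ⟨Fintype.card V, ⇑(Fintype.equivFin V), (Fintype.equivFin V).surjective,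
      fun u w h => fun hc => h.ne ((Fintype.equivFin V).injective hc),
      fun u => ⟨Fintype.equivFin V u, fun w hw =>
        Or.inl ((Fintype.equivFin V).injective hw)⟩, fun i j => ?_⟩
    have h1 : (Finset.univ.filter fun w => Fintype.equivFin V w = i).card ≤ 1 := by
      apply Finset.card_le_one.mpr
      intro a ha b hb
      simp only [Finset.mem_filter] at ha hb
      exact (Fintype.equivFin V).injective (ha.2.trans hb.2.symm)
    omega
  apply le_csInf hne
  rintro k ⟨c, hc1, hc2, hc3, hc4⟩
  -- color class of v is {v}
  have hclass : (Finset.univ.filter fun u => c u = c v) = {v} := by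
    ext u
    simp only [Finset.mem_filter, Finset.mem_univ, true_and, Finset.mem_singleton]
    constructor
    · intro h
      by_contra hne'
      exact hc2 (hv u hne') h.symm
    · rintro rfl; rfl
  have hcard : Fintype.card V =
      ∑ i : Fin k, (Finset.univ.filter fun u => c u = i).card := by
    rw [← Finset.card_univ]
    exact Finset.card_eq_sum_card_fiberwise (fun x _ => Finset.mem_univ (c x))
  have hsplit : ∑ i : Fin k, (Finset.univ.filter fun u => c u = i).card =
      (Finset.univ.filter fun u => c u = c v).card +
      ∑ i ∈ Finset.univ.erase (c v), (Finset.univ.filter fun u => c u = i).card := by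
    exact (Finset.add_sum_erase _ (fun i => (Finset.univ.filter fun u => c u = i).card) (Finset.mem_univ (c v))).symm
  have hbound : ∑ i ∈ Finset.univ.erase (c v),
      (Finset.univ.filter fun u => c u = i).card ≤ 2 * (k - 1) := by
    calc ∑ i ∈ Finset.univ.erase (c v), (Finset.univ.filter fun u => c u = i).card
        ≤ ∑ _i ∈ Finset.univ.erase (c v), 2 := by
          apply Finset.sum_le_sum
          intro i _
          have := hc4 i (c v)
          rw [hclass] at this
          simpa using this
      _ = 2 * (k - 1) := by
          rw [Finset.sum_const, smul_eq_mul]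
          have : (Finset.univ.erase (c v)).card = k - 1 := by
            rw [Finset.card_erase_of_mem (Finset.mem_univ _), Finset.card_univ,
              Fintype.card_fin]
          rw [this, mul_comm]
  have hk : 1 ≤ k := Fin.pos (c v)
  rw [hclass] at hsplit
  simp only [Finset.card_singleton] at hsplit
  omega
end
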